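/- arXiv:2210.03917 — 2 statements merged into one kernel-verified Lean document; each statement's English description precedes it below -/
import Mathlib

section
/- Fix ρ > 0, T > 0, x, y ∈ ℝ. For every continuous, piecewise C¹ function δ: [0,T] → ℝ with δ(0) = 0, δ(T) = x, ∫₀ᵀ δ dt = y, one has ρ∫₀ᵀ δ(t)² dt + ∫₀ᵀ δ'(t)² dt ≥ √ρ·( x² coth(√ρ T) + (x tanh(√ρ T/2) − √ρ y)²/(√ρ T − 2 tanh(√ρ T/2)) ), with equality if and only if δ(t) = c₁ sinh(√ρ t) + c₂ sinh(√ρ(T−t)) + c₃ for the constants c₁, c₂, c₃ determined by the three constraints. -/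
open Real MeasureTheory Set intervalIntegral Filter Topology

/-!
Put `a = √ρ`. The extremal `g t = c₁ sinh (a t) + c₂ sinh (a (T - t)) + c₃` solves
`g'' = a² g - a² c₃`, and its constants are chosen so that `g` meets the three constraints.
Then `h = δ - g` satisfies `h 0 = h T = ∫ h = 0`, so integrating by parts,
`∫ (a² g h + g' h') = [g' h]₀ᵀ + a² c₃ ∫ h = 0`. Hence the energy splits as
`E δ = E g + E h`, where `E h ≥ 0` vanishes only if `h = 0` on `[0, T]`. The same integration
by parts with `h = g` gives `E g = x g' T + a² c₃ y`, which is the closed form of the bound.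
-/

theorem Real.tanh_lt_self {v : ℝ} (hv : 0 < v) : tanh v < v := by
  rw [tanh_eq_sinh_div_cosh, div_lt_iff₀ (cosh_pos v)]
  have hmono : StrictMonoOn (fun u => u * cosh u - sinh u) (Ici 0) := by
    refine strictMonoOn_of_deriv_pos (convex_Ici 0) (by fun_prop) fun u hu => ?_
    rw [interior_Ici, mem_Ioi] at hu
    have hd : HasDerivAt (fun u => u * cosh u - sinh u) (u * sinh u) u :=
      (((hasDerivAt_id' u).mul (hasDerivAt_cosh u)).sub (hasDerivAt_sinh u)).congr_deriv
        (by ring)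
    rw [hd.deriv]
    exact mul_pos hu (sinh_pos_iff.2 hu)
  simpa using hmono self_mem_Ici hv.le hv

theorem Real.tanh_half_mul_sinh (u : ℝ) : tanh (u / 2) * sinh u = cosh u - 1 := by
  obtain ⟨v, rfl⟩ : ∃ v, u = 2 * v := ⟨u / 2, by ring⟩
  have hc : cosh v ≠ 0 := (cosh_pos v).ne'
  rw [mul_div_cancel_left₀ v two_ne_zero, sinh_two_mul, cosh_two_mul, tanh_eq_sinh_div_cosh]
  field_simp
  linear_combination (-1 : ℝ) * cosh_sq_sub_sinh_sq v

theorem intervalIntegrable_of_continuousOn_diff_of_sq {f : ℝ → ℝ} {a b : ℝ} (hab : a ≤ b)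
    {s : Set ℝ} (hs : s.Countable) (hf : ContinuousOn f (Icc a b \ s))
    (hf2 : IntervalIntegrable (fun t => f t ^ 2) volume a b) :
    IntervalIntegrable f volume a b := by
  rw [intervalIntegrable_iff_integrableOn_Ioc_of_le hab] at hf2 ⊢
  have hae : Icc a b \ s =ᵐ[volume] Ioc a b :=
    (sdiff_null_ae_eq_self (hs.measure_zero volume)).trans Ioc_ae_eq_Icc.symm
  have hmeas : AEStronglyMeasurable f (volume.restrict (Ioc a b)) := by
    rw [← Measure.restrict_congr_set hae]
    exact hf.aestronglyMeasurable (measurableSet_Icc.diff hs.measurableSet)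
  have : Fact (volume (Ioc a b) < ⊤) := ⟨measure_Ioc_lt_top⟩
  exact ((memLp_two_iff_integrable_sq hmeas).2 hf2).integrable one_le_two

theorem IntervalIntegrable.sq_sub {a b : ℝ} {f g : ℝ → ℝ}
    (hf : IntervalIntegrable f volume a b)
    (hf2 : IntervalIntegrable (fun t => f t ^ 2) volume a b) (hg : ContinuousOn g (uIcc a b)) :
    IntervalIntegrable (fun t => (f t - g t) ^ 2) volume a b := by
  have h := (hf2.sub ((hf.continuousOn_mul hg).const_mul 2)).add (hg.pow 2).intervalIntegrable
  exact h.congr fun t _ => by simp only [Pi.pow_apply]; ring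

theorem integral_mul_add_deriv_mul_eq {ρ k a b : ℝ} (hab : a ≤ b) {g g' h h' : ℝ → ℝ}
    {s : Set ℝ} (hs : s.Countable) (hg : Continuous g)
    (hg' : ∀ t, HasDerivAt g' (ρ * g t + k) t) (hh : ContinuousOn h (Icc a b))
    (hh' : ∀ t ∈ Ioo a b \ s, HasDerivAt h (h' t) t) (hi : IntervalIntegrable h' volume a b) :
    ∫ t in a..b, (ρ * g t * h t + g' t * h' t)
      = g' b * h b - g' a * h a - k * ∫ t in a..b, h t := by
  have hg'c : Continuous g' := continuous_iff_continuousAt.2 fun t => (hg' t).continuousAt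
  have hi₁ : IntervalIntegrable (fun t => ρ * g t * h t) volume a b :=
    ((continuous_const.mul hg).continuousOn.mul hh).intervalIntegrable_of_Icc hab
  have hi₂ : IntervalIntegrable (fun t => g' t * h' t) volume a b :=
    hi.continuousOn_mul hg'c.continuousOn
  have hih : IntervalIntegrable h volume a b := hh.intervalIntegrable_of_Icc hab
  have hftc := integral_eq_of_hasDerivAt_off_countable_of_le (fun t => g' t * h t)
    (fun t => (ρ * g t * h t + g' t * h' t) + k * h t) hab hs (hg'c.continuousOn.mul hh)
    (fun t ht => ((hg' t).mul (hh' t ht)).congr_deriv (by ring))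
    ((hi₁.add hi₂).add (hih.const_mul k))
  rw [integral_add (hi₁.add hi₂) (hih.const_mul k), intervalIntegral.integral_const_mul] at hftc
  linarith

noncomputable def energy (ρ a b : ℝ) (f f' : ℝ → ℝ) : ℝ :=
  ∫ t in a..b, (ρ * f t ^ 2 + f' t ^ 2)

theorem energy_nonneg {ρ a b : ℝ} (hρ : 0 ≤ ρ) (hab : a ≤ b) (f f' : ℝ → ℝ) :
    0 ≤ energy ρ a b f f' :=
  integral_nonneg hab fun _ _ => by positivity

theorem energy_eq_of_hasDerivAt {ρ k a b : ℝ} {g g' : ℝ → ℝ}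
    (hg : ∀ t, HasDerivAt g (g' t) t) (hg' : ∀ t, HasDerivAt g' (ρ * g t + k) t) :
    energy ρ a b g g' = g b * g' b - g a * g' a - k * ∫ t in a..b, g t := by
  have hgc : Continuous g := continuous_iff_continuousAt.2 fun t => (hg t).continuousAt
  have hg'c : Continuous g' := continuous_iff_continuousAt.2 fun t => (hg' t).continuousAt
  have hftc := integral_eq_sub_of_hasDerivAt (a := a) (b := b) (f := fun t => g t * g' t)
    (fun t _ => ((hg t).mul (hg' t)).congr_deriv (by ring : _ = ρ * g t ^ 2 + g' t ^ 2 + k * g t))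
    ((by fun_prop : Continuous fun t => ρ * g t ^ 2 + g' t ^ 2 + k * g t).intervalIntegrable a b)
  have hiE : IntervalIntegrable (fun t => ρ * g t ^ 2 + g' t ^ 2) volume a b :=
    (by fun_prop : Continuous fun t => ρ * g t ^ 2 + g' t ^ 2).intervalIntegrable a b
  rw [integral_add hiE ((hgc.intervalIntegrable a b).const_mul k),
    intervalIntegral.integral_const_mul] at hftc
  unfold energy
  linarith

theorem energy_eq_add_energy_sub {ρ k a b : ℝ} (hab : a ≤ b) {g g' δ δ' : ℝ → ℝ}
    {s : Set ℝ} (hs : s.Countable) (hg : ∀ t, HasDerivAt g (g' t) t)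
    (hg' : ∀ t, HasDerivAt g' (ρ * g t + k) t) (hδ : ContinuousOn δ (Icc a b))
    (hδ' : ∀ t ∈ Ioo a b \ s, HasDerivAt δ (δ' t) t) (hi : IntervalIntegrable δ' volume a b)
    (hi2 : IntervalIntegrable (fun t => δ' t ^ 2) volume a b)
    (ha : δ a = g a) (hb : δ b = g b) (hmean : ∫ t in a..b, δ t = ∫ t in a..b, g t) :
    ρ * (∫ t in a..b, δ t ^ 2) + ∫ t in a..b, δ' t ^ 2
      = energy ρ a b g g' + energy ρ a b (fun t => δ t - g t) (fun t => δ' t - g' t) := by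
  have hgc : Continuous g := continuous_iff_continuousAt.2 fun t => (hg t).continuousAt
  have hg'c : Continuous g' := continuous_iff_continuousAt.2 fun t => (hg' t).continuousAt
  have hδi : IntervalIntegrable δ volume a b := hδ.intervalIntegrable_of_Icc hab
  have horth : ∫ t in a..b, (ρ * g t * (δ t - g t) + g' t * (δ' t - g' t)) = 0 := by
    rw [integral_mul_add_deriv_mul_eq (h := fun t => δ t - g t) hab hs hgc hg'
      (hδ.sub hgc.continuousOn) (fun t ht => (hδ' t ht).sub (hg t))
      (hi.sub (hg'c.intervalIntegrable a b))]
    simp [ha, hb, integral_sub hδi (hgc.intervalIntegrable a b), hmean]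
  have hδ2 : IntervalIntegrable (fun t => ρ * δ t ^ 2) volume a b :=
    ((hδ.pow 2).intervalIntegrable_of_Icc hab).const_mul ρ
  have hiE : IntervalIntegrable (fun t => ρ * δ t ^ 2 + δ' t ^ 2) volume a b := hδ2.add hi2
  have hiEg : IntervalIntegrable (fun t => ρ * g t ^ 2 + g' t ^ 2) volume a b :=
    (by fun_prop : Continuous fun t => ρ * g t ^ 2 + g' t ^ 2).intervalIntegrable a b
  have hiO : IntervalIntegrable (fun t => ρ * g t * (δ t - g t) + g' t * (δ' t - g' t))
      volume a b :=
    (((continuous_const.mul hgc).continuousOn.mul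
      (hδ.sub hgc.continuousOn)).intervalIntegrable_of_Icc hab).add
      ((hi.sub (hg'c.intervalIntegrable a b)).continuousOn_mul hg'c.continuousOn)
  have hsplit : energy ρ a b (fun t => δ t - g t) (fun t => δ' t - g' t)
      = (∫ t in a..b, (ρ * δ t ^ 2 + δ' t ^ 2)) - energy ρ a b g g'
        - 2 * ∫ t in a..b, (ρ * g t * (δ t - g t) + g' t * (δ' t - g' t)) := by
    rw [energy, energy, ← intervalIntegral.integral_const_mul, ← integral_sub hiE hiEg,
      ← integral_sub (hiE.sub hiEg) (hiO.const_mul 2)]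
    exact integral_congr fun t _ => by ring
  rw [hsplit, horth, integral_add hδ2 hi2, intervalIntegral.integral_const_mul]
  ring

theorem energy_eq_zero_iff {ρ a b : ℝ} (hρ : 0 < ρ) (hab : a < b) {h h' : ℝ → ℝ}
    {s : Set ℝ} (hs : s.Countable) (hc : ContinuousOn h (Icc a b))
    (hd : ∀ t ∈ Ioo a b \ s, HasDerivAt h (h' t) t)
    (hi : IntervalIntegrable (fun t => h' t ^ 2) volume a b) :
    energy ρ a b h h' = 0 ↔ ∀ t ∈ Icc a b, h t = 0 := by
  constructor
  · intro hE t ht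
    by_contra hne
    have hi₁ : IntervalIntegrable (fun u => ρ * h u ^ 2) volume a b :=
      ((hc.pow 2).intervalIntegrable_of_Icc hab.le).const_mul ρ
    have hpos : 0 < ∫ u in a..b, ρ * h u ^ 2 :=
      integral_pos hab ((hc.pow 2).const_smul ρ) (fun u _ => by positivity)
        ⟨t, ht, by positivity⟩
    have hle : ∫ u in a..b, ρ * h u ^ 2 ≤ energy ρ a b h h' :=
      integral_mono_on hab.le hi₁ (hi₁.add hi) fun u _ => le_add_of_nonneg_right (sq_nonneg _)
    linarith
  · intro hzero
    have hnull : ∀ᵐ t ∂volume, t ∉ insert b s :=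
      measure_eq_zero_iff_ae_notMem.1 ((hs.insert b).measure_zero volume)
    refine (integral_congr_ae (hnull.mono fun t hts htI => ?_)).trans integral_zero
    rw [uIoc_of_le hab.le] at htI
    have htIoo : t ∈ Ioo a b := ⟨htI.1, htI.2.lt_of_ne fun hb => hts (hb ▸ mem_insert _ _)⟩
    have hloc : h =ᶠ[𝓝 t] fun _ => 0 := by
      filter_upwards [Ioo_mem_nhds htIoo.1 htIoo.2] with u hu
      exact hzero u (Ioo_subset_Icc_self hu)
    have hd0 : h' t = 0 := (hd t ⟨htIoo, fun hs' => hts (mem_insert_of_mem _ hs')⟩).unique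
      ((hasDerivAt_const t 0).congr_of_eventuallyEq hloc)
    simp [hzero t (Ioo_subset_Icc_self htIoo), hd0]

section Extremal

variable (a T A B C : ℝ)

noncomputable def extremal (t : ℝ) : ℝ := A * sinh (a * t) + B * sinh (a * (T - t)) + C

noncomputable def extremalDeriv (t : ℝ) : ℝ := a * A * cosh (a * t) - a * B * cosh (a * (T - t))

theorem hasDerivAt_extremal (t : ℝ) :
    HasDerivAt (extremal a T A B C) (extremalDeriv a T A B t) t :=
  ((((hasDerivAt_id' t).const_mul a).sinh.const_mul A).add
    ((((hasDerivAt_id' t).const_sub T).const_mul a).sinh.const_mul B) |>.add_const C).congr_deriv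
    (by simp only [extremalDeriv]; ring)

theorem hasDerivAt_extremalDeriv (t : ℝ) :
    HasDerivAt (extremalDeriv a T A B) (a ^ 2 * extremal a T A B C t + -(a ^ 2 * C)) t :=
  ((((hasDerivAt_id' t).const_mul a).cosh.const_mul (a * A)).sub
    ((((hasDerivAt_id' t).const_sub T).const_mul a).cosh.const_mul (a * B))).congr_deriv
    (by simp only [extremal]; ring)

theorem extremal_zero : extremal a T A B C 0 = B * sinh (a * T) + C := by
  simp [extremal]

theorem extremal_self : extremal a T A B C T = A * sinh (a * T) + C := by
  simp [extremal]

theorem extremalDeriv_self : extremalDeriv a T A B T = a * A * cosh (a * T) - a * B := by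
  simp [extremalDeriv]

theorem continuous_extremal : Continuous (extremal a T A B C) := by
  unfold extremal
  fun_prop

theorem integral_extremal {a : ℝ} (ha : a ≠ 0) :
    ∫ t in (0 : ℝ)..T, extremal a T A B C t = (A + B) * (cosh (a * T) - 1) / a + C * T := by
  have hprim : ∀ t, HasDerivAt (fun u => (A * cosh (a * u) - B * cosh (a * (T - u))) / a + C * u)
      (extremal a T A B C t) t := by
    intro t
    refine (((((hasDerivAt_id' t).const_mul a).cosh.const_mul A).sub
      ((((hasDerivAt_id' t).const_sub T).const_mul a).cosh.const_mul B)).div_const a |>.add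
      ((hasDerivAt_id' t).const_mul C)).congr_deriv ?_
    simp only [extremal]
    field_simp
    ring
  rw [integral_eq_sub_of_hasDerivAt (fun t _ => hprim t)
    ((continuous_extremal a T A B C).intervalIntegrable _ _)]
  simp only [mul_zero, sub_zero, sub_self, cosh_zero]
  ring

end Extremal

section Fitted

variable (a T x y : ℝ)

noncomputable def fitShift : ℝ :=
  (a * y - x * tanh (a * T / 2)) / (a * T - 2 * tanh (a * T / 2))

noncomputable def fitted : ℝ → ℝ :=
  extremal a T ((x - fitShift a T x y) / sinh (a * T)) (-fitShift a T x y / sinh (a * T))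
    (fitShift a T x y)

noncomputable def fittedDeriv : ℝ → ℝ :=
  extremalDeriv a T ((x - fitShift a T x y) / sinh (a * T)) (-fitShift a T x y / sinh (a * T))

theorem hasDerivAt_fitted (t : ℝ) : HasDerivAt (fitted a T x y) (fittedDeriv a T x y t) t :=
  hasDerivAt_extremal _ _ _ _ _ t

theorem hasDerivAt_fittedDeriv (t : ℝ) :
    HasDerivAt (fittedDeriv a T x y) (a ^ 2 * fitted a T x y t + -(a ^ 2 * fitShift a T x y)) t :=
  hasDerivAt_extremalDeriv _ _ _ _ _ t

theorem continuous_fitted : Continuous (fitted a T x y) := continuous_extremal _ _ _ _ _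

theorem continuous_fittedDeriv : Continuous (fittedDeriv a T x y) :=
  continuous_iff_continuousAt.2 fun t => (hasDerivAt_fittedDeriv a T x y t).continuousAt

variable {a T}

theorem sinh_mul_ne_zero (ha : 0 < a) (hT : 0 < T) : sinh (a * T) ≠ 0 :=
  (sinh_pos_iff.2 (mul_pos ha hT)).ne'

theorem mul_sub_two_mul_tanh_ne_zero (ha : 0 < a) (hT : 0 < T) :
    a * T - 2 * tanh (a * T / 2) ≠ 0 := by
  have := tanh_lt_self (half_pos (mul_pos ha hT))
  linarith

theorem fitted_zero (ha : 0 < a) (hT : 0 < T) : fitted a T x y 0 = 0 := by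
  have := sinh_mul_ne_zero ha hT
  rw [fitted, extremal_zero]
  field_simp
  ring

theorem fitted_self (ha : 0 < a) (hT : 0 < T) : fitted a T x y T = x := by
  have := sinh_mul_ne_zero ha hT
  rw [fitted, extremal_self]
  field_simp
  ring

theorem integral_fitted (ha : 0 < a) (hT : 0 < T) :
    ∫ t in (0 : ℝ)..T, fitted a T x y t = y := by
  have hsh := sinh_mul_ne_zero ha hT
  have hD := mul_sub_two_mul_tanh_ne_zero ha hT
  have hhalf := tanh_half_mul_sinh (a * T)
  rw [fitted, integral_extremal _ _ _ _ ha.ne', fitShift]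
  field_simp
  linear_combination (2 * a * y - x * a * T) * hhalf

theorem energy_fitted (ha : 0 < a) (hT : 0 < T) :
    energy (a ^ 2) 0 T (fitted a T x y) (fittedDeriv a T x y)
      = a * (x ^ 2 * (cosh (a * T) / sinh (a * T))
          + (x * tanh (a * T / 2) - a * y) ^ 2 / (a * T - 2 * tanh (a * T / 2))) := by
  have hsh := sinh_mul_ne_zero ha hT
  have hD := mul_sub_two_mul_tanh_ne_zero ha hT
  have hhalf := tanh_half_mul_sinh (a * T)
  rw [energy_eq_of_hasDerivAt (hasDerivAt_fitted a T x y) (hasDerivAt_fittedDeriv a T x y),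
    fitted_zero x y ha hT, fitted_self x y ha hT, integral_fitted x y ha hT, fittedDeriv,
    extremalDeriv_self, fitShift]
  field_simp
  linear_combination x * a * (a * y - x * tanh (a * T / 2)) * hhalf

end Fitted

theorem energy_lower_bound (ρ T x y : ℝ) (hρ : 0 < ρ) (hT : 0 < T)
    (δ δ' : ℝ → ℝ) (s : Finset ℝ)
    (hcont : ContinuousOn δ (Set.Icc 0 T))
    (hderiv : ∀ t ∈ Set.Icc (0 : ℝ) T \ (s : Set ℝ), HasDerivAt δ (δ' t) t)
    (hδ'cont : ContinuousOn δ' (Set.Icc 0 T \ (s : Set ℝ)))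
    (hint : IntervalIntegrable (fun t => (δ' t) ^ 2) volume 0 T)
    (h0 : δ 0 = 0) (hTx : δ T = x) (hy : (∫ t in (0 : ℝ)..T, δ t) = y) :
    ρ * (∫ t in (0 : ℝ)..T, (δ t) ^ 2) + (∫ t in (0 : ℝ)..T, (δ' t) ^ 2)
      ≥ Real.sqrt ρ * (x ^ 2 * (cosh (Real.sqrt ρ * T) / sinh (Real.sqrt ρ * T))
          + (x * tanh (Real.sqrt ρ * T / 2) - Real.sqrt ρ * y) ^ 2 /
            (Real.sqrt ρ * T - 2 * tanh (Real.sqrt ρ * T / 2)))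
    ∧ (ρ * (∫ t in (0 : ℝ)..T, (δ t) ^ 2) + (∫ t in (0 : ℝ)..T, (δ' t) ^ 2)
        = Real.sqrt ρ * (x ^ 2 * (cosh (Real.sqrt ρ * T) / sinh (Real.sqrt ρ * T))
          + (x * tanh (Real.sqrt ρ * T / 2) - Real.sqrt ρ * y) ^ 2 /
            (Real.sqrt ρ * T - 2 * tanh (Real.sqrt ρ * T / 2)))
      ↔ ∀ t ∈ Set.Icc (0 : ℝ) T,
          δ t = (x - (Real.sqrt ρ * y - x * tanh (Real.sqrt ρ * T / 2)) /
              (Real.sqrt ρ * T - 2 * tanh (Real.sqrt ρ * T / 2))) / sinh (Real.sqrt ρ * T)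
              * sinh (Real.sqrt ρ * t)
            + (-((Real.sqrt ρ * y - x * tanh (Real.sqrt ρ * T / 2)) /
              (Real.sqrt ρ * T - 2 * tanh (Real.sqrt ρ * T / 2)))) / sinh (Real.sqrt ρ * T)
              * sinh (Real.sqrt ρ * (T - t))
            + (Real.sqrt ρ * y - x * tanh (Real.sqrt ρ * T / 2)) /
              (Real.sqrt ρ * T - 2 * tanh (Real.sqrt ρ * T / 2))) := by
  obtain ⟨a, ha, rfl⟩ : ∃ a, 0 < a ∧ ρ = a ^ 2 :=
    ⟨√ρ, sqrt_pos.2 hρ, (sq_sqrt hρ.le).symm⟩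
  rw [sqrt_sq ha.le]
  have hs : (s : Set ℝ).Countable := s.countable_toSet
  have hδ' : ∀ t ∈ Ioo 0 T \ s, HasDerivAt δ (δ' t) t :=
    fun t ht => hderiv t ⟨Ioo_subset_Icc_self ht.1, ht.2⟩
  have hδ'i := intervalIntegrable_of_continuousOn_diff_of_sq hT.le hs hδ'cont hint
  have hdecomp := energy_eq_add_energy_sub hT.le hs (hasDerivAt_fitted a T x y)
    (hasDerivAt_fittedDeriv a T x y) hcont hδ' hδ'i hint (h0.trans (fitted_zero x y ha hT).symm)
    (hTx.trans (fitted_self x y ha hT).symm) (hy.trans (integral_fitted x y ha hT).symm)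
  have hrest := energy_eq_zero_iff (h := fun t => δ t - fitted a T x y t) (pow_pos ha 2) hT
    hs (hcont.sub (continuous_fitted a T x y).continuousOn)
    (fun t ht => (hδ' t ht).sub (hasDerivAt_fitted a T x y t))
    (hδ'i.sq_sub hint (continuous_fittedDeriv a T x y).continuousOn)
  rw [hdecomp, energy_fitted x y ha hT]
  refine ⟨le_add_of_nonneg_right (energy_nonneg (sq_nonneg a) hT.le _ _), ?_⟩
  rw [add_eq_left, hrest]
  simp only [sub_eq_zero]
  rfl
end

section
/- Let ρ, T, Λ > 0 and κ ∈ (0, 1/(2ρΛT)). With A, B, C as in the previous statement, B < 0 and AB − C² > 0; consequently for any η, θ ∈ ℝ the quadratic form (x,y) ↦ Ax² + By² + 2Cxy + ηx + θy has a unique maximizer given by (x̄, ȳ) = (1/(2(AB − C²)))·(Cθ − Bη, Cη − Aθ). -/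
/-!
Put `z = √ρ T` and `t = tanh (z / 2)`. The half-angle formula `coth z = (t² + 1) / (2t)` turns
the coefficients into rational functions of `t`:
`B = -t / (Λ T (z - 2t))` and `AB - C² = (1 - 4κΛ√ρ t) / (4Λ² z (z - 2t))`.
Since `0 < t < z / 2`, this gives `B < 0`, and `4κΛ√ρ t < 2κΛρT < 1` makes the determinant positive.
The form is then negative definite, so it is maximized exactly at its critical point, which
Cramer's rule gives as the stated formula.
-/

open Real

namespace Real

lemma sinh_lt_mul_cosh {x : ℝ} (hx : 0 < x) : sinh x < x * cosh x := by
  have hderiv (y : ℝ) : HasDerivAt (fun y ↦ y * cosh y - sinh y) (y * sinh y) y := by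
    have h := ((hasDerivAt_id' y).mul (hasDerivAt_cosh y)).sub (hasDerivAt_sinh y)
    rwa [one_mul, add_sub_cancel_left] at h
  have hmono : StrictMonoOn (fun y ↦ y * cosh y - sinh y) (Set.Ici 0) := by
    refine strictMonoOn_of_deriv_pos (convex_Ici 0) (by fun_prop) fun y hy ↦ ?_
    rw [interior_Ici, Set.mem_Ioi] at hy
    rw [(hderiv y).deriv]
    exact mul_pos hy (sinh_pos_iff.2 hy)
  have := hmono Set.self_mem_Ici hx.le hx
  simp only [zero_mul, sinh_zero, sub_zero] at this
  linarith

lemma tanh_lt_self_s13 {x : ℝ} (hx : 0 < x) : tanh x < x := by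
  rw [tanh_eq_sinh_div_cosh, div_lt_iff₀ (cosh_pos x)]
  exact sinh_lt_mul_cosh hx

lemma tanh_pos {x : ℝ} (hx : 0 < x) : 0 < tanh x := by
  rw [tanh_eq_sinh_div_cosh]
  exact div_pos (sinh_pos_iff.2 hx) (cosh_pos x)

lemma cosh_div_sinh_eq_tanh_half (x : ℝ) :
    cosh x / sinh x = (tanh (x / 2) ^ 2 + 1) / (2 * tanh (x / 2)) := by
  have hc := (cosh_pos (x / 2)).ne'
  rw [show x = 2 * (x / 2) by ring, cosh_two_mul, sinh_two_mul, mul_div_cancel_left₀ _ two_ne_zero,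
    tanh_eq_sinh_div_cosh]
  field_simp
  ring

end Real

lemma quadratic_form_nonpos {A B C : ℝ} (hB : B < 0) (hD : 0 < A * B - C ^ 2) (u v : ℝ) :
    A * u ^ 2 + B * v ^ 2 + 2 * C * u * v ≤ 0 := by
  have hA : A < 0 := by nlinarith [sq_nonneg C]
  -- `A * (A u² + B v² + 2 C u v) = (A u + C v)² + (A B - C²) v²`
  nlinarith [sq_nonneg (A * u + C * v), mul_nonneg hD.le (sq_nonneg v)]

lemma quadratic_le_at_critical_point {A B C : ℝ} (hB : B < 0) (hD : 0 < A * B - C ^ 2)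
    (η θ : ℝ) (q : ℝ × ℝ) :
    let x := 1 / (2 * (A * B - C ^ 2)) * (C * θ - B * η)
    let y := 1 / (2 * (A * B - C ^ 2)) * (C * η - A * θ)
    A * q.1 ^ 2 + B * q.2 ^ 2 + 2 * C * q.1 * q.2 + η * q.1 + θ * q.2
      ≤ A * x ^ 2 + B * y ^ 2 + 2 * C * x * y + η * x + θ * y := by
  intro x y
  have hexpand : A * q.1 ^ 2 + B * q.2 ^ 2 + 2 * C * q.1 * q.2 + η * q.1 + θ * q.2
      - (A * x ^ 2 + B * y ^ 2 + 2 * C * x * y + η * x + θ * y)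
      = A * (q.1 - x) ^ 2 + B * (q.2 - y) ^ 2 + 2 * C * (q.1 - x) * (q.2 - y) := by
    simp only [x, y]
    field_simp
    ring
  linarith [quadratic_form_nonpos hB hD (q.1 - x) (q.2 - y)]

theorem quadratic_form_maximizer (ρ T Λ κ : ℝ) (hρ : 0 < ρ) (hT : 0 < T) (hΛ : 0 < Λ)
    (hκ : κ ∈ Set.Ioo 0 (1 / (2 * ρ * Λ * T)))
    (A B C : ℝ)
    (hA : A = κ - 1 / (2 * Λ * Real.sqrt ρ) *
      (cosh (Real.sqrt ρ * T) / sinh (Real.sqrt ρ * T)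
        + tanh (Real.sqrt ρ * T / 2) ^ 2 /
          (Real.sqrt ρ * T - 2 * tanh (Real.sqrt ρ * T / 2))))
    (hB : B = 1 / (2 * Λ * T) - Real.sqrt ρ /
      (2 * Λ * (Real.sqrt ρ * T - 2 * tanh (Real.sqrt ρ * T / 2))))
    (hC : C = tanh (Real.sqrt ρ * T / 2) /
      (2 * Λ * (Real.sqrt ρ * T - 2 * tanh (Real.sqrt ρ * T / 2)))) :
    B < 0 ∧ A * B - C ^ 2 > 0 ∧
    ∀ η θ : ℝ, ∃! p : ℝ × ℝ,
      (∀ q : ℝ × ℝ, A * q.1 ^ 2 + B * q.2 ^ 2 + 2 * C * q.1 * q.2 + η * q.1 + θ * q.2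
          ≤ A * p.1 ^ 2 + B * p.2 ^ 2 + 2 * C * p.1 * p.2 + η * p.1 + θ * p.2) ∧
      p = (1 / (2 * (A * B - C ^ 2)) * (C * θ - B * η),
           1 / (2 * (A * B - C ^ 2)) * (C * η - A * θ)) := by
  obtain ⟨hκ₀, hκ₁⟩ := hκ
  rw [cosh_div_sinh_eq_tanh_half] at hA
  rw [← sq_sqrt hρ.le] at hκ₁
  generalize hs : √ρ = s at hA hB hC hκ₁
  generalize ht : tanh (s * T / 2) = t at hA hB hC
  have hs₀ : 0 < s := hs ▸ sqrt_pos.2 hρ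
  have ht₀ : 0 < t := ht ▸ tanh_pos (by positivity)
  have hd : 0 < s * T - 2 * t := by linarith [ht ▸ tanh_lt_self_s13 (by positivity : 0 < s * T / 2)]
  have hB' : B = -t / (Λ * T * (s * T - 2 * t)) := by
    rw [hB, div_sub_div _ _ (by positivity) (by positivity),
      div_eq_div_iff (by positivity) (by positivity)]
    ring
  have hD : A * B - C ^ 2 = (1 - 4 * κ * Λ * s * t) / (4 * Λ ^ 2 * (s * T) * (s * T - 2 * t)) := by
    rw [hA, hB', hC]; field_simp; ring
  have hnum : 4 * κ * Λ * s * t < 1 := by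
    rw [lt_div_iff₀ (by positivity)] at hκ₁
    nlinarith [mul_pos (mul_pos hκ₀ hΛ) hs₀]
  have hB_neg : B < 0 := by
    rw [hB']; exact div_neg_of_neg_of_pos (by linarith) (by positivity)
  have hD_pos : 0 < A * B - C ^ 2 := by
    rw [hD]; exact div_pos (by linarith) (by positivity)
  exact ⟨hB_neg, hD_pos, fun η θ ↦
    ⟨_, ⟨quadratic_le_at_critical_point hB_neg hD_pos η θ, rfl⟩, fun _ hp ↦ hp.2⟩⟩
end
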